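/- arXiv:1910.11463 — 7 statements merged into one kernel-verified Lean document; each statement's English description precedes it below -/
import Mathlib

section
/- Let ξ, ζ, A, P be positive real numbers with ζ ≤ ξ, A ≥ 1, P ≥ 1. Then the function S(K) = ξ·log₂(P/K)·(A/K) + ζ·log₂(K) is strictly decreasing on the interval [1, min{P, A}]. -/
/-- For positive ξ, ζ, A, P with ζ ≤ ξ, A ≥ 1, P ≥ 1, the function
`S(K) = ξ·log₂(P/K)·(A/K) + ζ·log₂(K)` is strictly decreasing on [1, min{P, A}]. -/
theorem stmt_6 (ξ ζ A P : ℝ) (hξ : 0 < ξ) (hζ : 0 < ζ)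
    (hζξ : ζ ≤ ξ) (hA : 1 ≤ A) (hP : 1 ≤ P) :
    StrictAntiOn (fun K : ℝ => ξ * Real.logb 2 (P / K) * (A / K) + ζ * Real.logb 2 K)
      (Set.Icc 1 (min P A)) := by
  have hlog2 : 0 < Real.log 2 := Real.log_pos one_lt_two
  have hPpos : 0 < P := lt_of_lt_of_le one_pos hP
  apply strictAntiOn_of_deriv_neg (convex_Icc _ _)
  · -- continuity on Icc
    apply continuousOn_of_forall_continuousAt
    intro x hx
    have hx0 : (0:ℝ) < x := lt_of_lt_of_le one_pos hx.1
    have hdiv : ContinuousAt (fun K : ℝ => P / K) x :=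
      (continuousAt_const.div continuousAt_id hx0.ne')
    have hPx : P / x ≠ 0 := by positivity
    have h1 : ContinuousAt (fun K : ℝ => Real.logb 2 (P / K)) x :=
      (Real.continuousAt_logb (b := 2) hPx).comp hdiv
    have h2 : ContinuousAt (fun K : ℝ => A / K) x :=
      (continuousAt_const.div continuousAt_id hx0.ne')
    have h3 : ContinuousAt (fun K : ℝ => Real.logb 2 K) x :=
      Real.continuousAt_logb hx0.ne'
    exact ((continuousAt_const.mul h1).mul h2).add (continuousAt_const.mul h3)
  · intro x hx
    rw [interior_Icc] at hx
    have hx1 : (1:ℝ) < x := hx.1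
    have hx0 : (0:ℝ) < x := lt_trans one_pos hx1
    have hxA : x < A := lt_of_lt_of_le hx.2 (min_le_right _ _)
    have hxP : x < P := lt_of_lt_of_le hx.2 (min_le_left _ _)
    -- derivative computation
    have h1 : HasDerivAt (fun K : ℝ => Real.log P - Real.log K) (0 - x⁻¹) x :=
      (hasDerivAt_const x (Real.log P)).sub (Real.hasDerivAt_log hx0.ne')
    have h2 : HasDerivAt (fun K : ℝ => A * K⁻¹) (A * (-(x ^ 2)⁻¹)) x :=
      (hasDerivAt_inv hx0.ne').const_mul A
    have h3 := h1.mul h2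
    have h4 := h3.const_mul (ξ / Real.log 2)
    have h5 := (Real.hasDerivAt_log hx0.ne').const_mul (ζ / Real.log 2)
    have hg : HasDerivAt
        (fun K : ℝ => ξ / Real.log 2 * ((Real.log P - Real.log K) * (A * K⁻¹))
          + ζ / Real.log 2 * Real.log K)
        (ξ / Real.log 2 * ((0 - x⁻¹) * (A * x⁻¹)
          + (Real.log P - Real.log x) * (A * (-(x ^ 2)⁻¹)))
          + ζ / Real.log 2 * x⁻¹) x := h4.add h5
    have heq : (fun K : ℝ => ξ * Real.logb 2 (P / K) * (A / K) + ζ * Real.logb 2 K)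
        =ᶠ[nhds x] (fun K : ℝ => ξ / Real.log 2 * ((Real.log P - Real.log K) * (A * K⁻¹))
          + ζ / Real.log 2 * Real.log K) := by
      filter_upwards [eventually_gt_nhds hx0] with K hK
      rw [Real.logb, Real.logb, Real.log_div hPpos.ne' hK.ne']
      rw [div_eq_mul_inv, div_eq_mul_inv A, div_eq_mul_inv ξ, div_eq_mul_inv ζ]
      ring
    have hf : HasDerivAt
        (fun K : ℝ => ξ * Real.logb 2 (P / K) * (A / K) + ζ * Real.logb 2 K)
        (ξ / Real.log 2 * ((0 - x⁻¹) * (A * x⁻¹)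
          + (Real.log P - Real.log x) * (A * (-(x ^ 2)⁻¹)))
          + ζ / Real.log 2 * x⁻¹) x := hg.congr_of_eventuallyEq heq
    rw [hf.deriv]
    -- show the derivative is negative
    have hlogle : Real.log x < Real.log P := Real.log_lt_log hx0 hxP
    have hA0 : (0:ℝ) < A := lt_of_lt_of_le one_pos hA
    have key : ζ * x - ξ * A - ξ * A * (Real.log P - Real.log x) < 0 := by
      nlinarith [mul_le_mul_of_nonneg_right hζξ hx0.le,
        mul_lt_mul_of_pos_left hxA hξ,
        mul_nonneg (mul_nonneg hξ.le hA0.le) (sub_nonneg.mpr hlogle.le)]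
    have hD : ξ / Real.log 2 * ((0 - x⁻¹) * (A * x⁻¹)
          + (Real.log P - Real.log x) * (A * (-(x ^ 2)⁻¹)))
          + ζ / Real.log 2 * x⁻¹
        = (ζ * x - ξ * A - ξ * A * (Real.log P - Real.log x)) / (x ^ 2 * Real.log 2) := by
      field_simp
      ring
    rw [hD]
    exact div_neg_of_neg_of_pos key (by positivity)
end

section
/- Let ξ, ζ, A, P be positive real numbers with ζ ≤ ξ, A ≥ 1, P ≥ 1. Then for every K ∈ [1, min{P, A}) one has S(min{P, A}) < S(K); that is, on the admissible interval [1, min{P, A}], the communication-stage model S is uniquely minimized at K = min{P, A}. -/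
/-!
Put `d = log₂ m - log₂ K > 0` for `K < m ≤ min P A`. Since `log₂ (P / K) = log₂ (P / m) + d`,
`S K - S m = ξ log₂ (P / m) (A / K - A / m) + (ξ A / K - ζ) d`. The first term is nonnegative
because `m ≤ P` and `K < m`, and the second is positive because `A / K > 1` and `ζ ≤ ξ`.
So `S` is strictly decreasing on `(0, min P A]`.
-/

open Real

/-- The model `S(K)` with `α = 1`. -/
noncomputable def commStages (ξ ζ A P K : ℝ) : ℝ :=
  ξ * logb 2 (P / K) * (A / K) + ζ * logb 2 K

lemma commStages_sub_commStages {ξ ζ A P K m : ℝ} (hP : 0 < P) (hK : 0 < K) (hm : 0 < m) :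
    commStages ξ ζ A P K - commStages ξ ζ A P m =
      ξ * logb 2 (P / m) * (A / K - A / m) + (ξ * (A / K) - ζ) * (logb 2 m - logb 2 K) := by
  unfold commStages
  rw [logb_div hP.ne' hK.ne', logb_div hP.ne' hm.ne']
  ring

theorem commStages_strictAntiOn {ξ ζ A P : ℝ} (hξ : 0 < ξ) (hζξ : ζ ≤ ξ) :
    StrictAntiOn (commStages ξ ζ A P) (Set.Ioc 0 (min P A)) := by
  rintro K ⟨hK, -⟩ m ⟨hm, hmPA⟩ hKm
  obtain ⟨hmP, hmA⟩ := le_min_iff.1 hmPA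
  have hlog : 0 < logb 2 m - logb 2 K := sub_pos.2 (logb_lt_logb one_lt_two hK hKm)
  have hratio : 1 < A / K := (one_lt_div hK).2 (hKm.trans_le hmA)
  have hfirst : 0 ≤ ξ * logb 2 (P / m) * (A / K - A / m) := by
    have hlogP : 0 ≤ logb 2 (P / m) := logb_nonneg one_lt_two ((one_le_div hm).2 hmP)
    have hAdiv : A / m ≤ A / K := div_le_div_of_nonneg_left (hm.le.trans hmA) hK hKm.le
    exact mul_nonneg (mul_nonneg hξ.le hlogP) (sub_nonneg.2 hAdiv)
  have hsecond : 0 < (ξ * (A / K) - ζ) * (logb 2 m - logb 2 K) :=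
    mul_pos (sub_pos.2 (hζξ.trans_lt (lt_mul_of_one_lt_right hξ hratio))) hlog
  have hdiff := commStages_sub_commStages (ξ := ξ) (ζ := ζ) (A := A) (hm.trans_le hmP) hK hm
  linarith

theorem stmt_7_general (ξ ζ A P : ℝ) (hξ : 0 < ξ)
    (hζξ : ζ ≤ ξ) :
    ∀ K ∈ Set.Ico (1 : ℝ) (min P A),
      ξ * Real.logb 2 (P / min P A) * (A / min P A) + ζ * Real.logb 2 (min P A) <
        ξ * Real.logb 2 (P / K) * (A / K) + ζ * Real.logb 2 K := by
  rintro K ⟨hK1, hKm⟩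
  have hK : 0 < K := one_pos.trans_le hK1
  exact commStages_strictAntiOn hξ hζξ ⟨hK, hKm.le⟩ ⟨hK.trans hKm, le_rfl⟩ hKm

/-- For positive ξ, ζ, A, P with ζ ≤ ξ, A ≥ 1, P ≥ 1, for every
K ∈ [1, min{P, A}) one has S(min{P, A}) < S(K); i.e. on the admissible interval
[1, min{P, A}] the communication-stage model S is uniquely minimized at K = min{P, A}. -/
theorem stmt_7 (ξ ζ A P : ℝ) (hξ : 0 < ξ) (hζ : 0 < ζ)
    (hζξ : ζ ≤ ξ) (hA : 1 ≤ A) (hP : 1 ≤ P) :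
    ∀ K ∈ Set.Ico (1 : ℝ) (min P A),
      ξ * Real.logb 2 (P / min P A) * (A / min P A) + ζ * Real.logb 2 (min P A) <
        ξ * Real.logb 2 (P / K) * (A / K) + ζ * Real.logb 2 K :=
  stmt_7_general ξ ζ A P hξ hζξ
end

section
/- Let ξ, ζ, A, P be positive real numbers with P ≥ 1 and let α ∈ (1, 2]. Then the function G_α(K) = (ζ/ln 2)·K − ξ·A·(α·(log₂(P/K))^(α−1)/ln 2 + (log₂(P/K))^α) is strictly increasing on the interval [1, P]. -/
/-- For positive ξ, ζ, A, P with P ≥ 1 and α ∈ (1,2], the function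
`G_α(K) = (ζ/ln 2)·K − ξ·A·(α·(log₂(P/K))^(α−1)/ln 2 + (log₂(P/K))^α)` is strictly
increasing on [1, P]. -/
theorem stmt_9 (ξ ζ A P α : ℝ) (hξ : 0 < ξ) (hζ : 0 < ζ) (hA : 0 < A) (hP : 1 ≤ P)
    (hα : α ∈ Set.Ioc (1 : ℝ) 2) :
    StrictMonoOn
      (fun K : ℝ => ζ / Real.log 2 * K -
        ξ * A * (α * Real.logb 2 (P / K) ^ (α - 1) / Real.log 2 + Real.logb 2 (P / K) ^ α))
      (Set.Icc 1 P) := by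
  obtain ⟨hα1, hα2⟩ := hα
  intro x hx y hy hxy
  obtain ⟨hx1, hxP⟩ := hx
  obtain ⟨hy1, hyP⟩ := hy
  have hlog2 : (0:ℝ) < Real.log 2 := Real.log_pos one_lt_two
  have hx0 : (0:ℝ) < x := lt_of_lt_of_le one_pos hx1
  have hy0 : (0:ℝ) < y := lt_of_lt_of_le one_pos hy1
  have hv0 : 0 ≤ Real.logb 2 (P / y) :=
    Real.logb_nonneg one_lt_two (by rw [le_div_iff₀ hy0]; linarith)
  have huv : Real.logb 2 (P / y) ≤ Real.logb 2 (P / x) := by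
    exact Real.logb_le_logb_of_le one_lt_two (div_pos (lt_of_lt_of_le one_pos hP) hy0)
      (div_le_div_of_nonneg_left (le_of_lt (lt_of_lt_of_le one_pos hP)) hx0 (le_of_lt hxy))
  have hE : ξ * A * (α * Real.logb 2 (P / y) ^ (α - 1) / Real.log 2 + Real.logb 2 (P / y) ^ α)
      ≤ ξ * A * (α * Real.logb 2 (P / x) ^ (α - 1) / Real.log 2 + Real.logb 2 (P / x) ^ α) := by
    gcongr <;> linarith
  have hlin : ζ / Real.log 2 * x < ζ / Real.log 2 * y :=
    mul_lt_mul_of_pos_left hxy (div_pos hζ hlog2)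
  simp only []
  linarith
end

section
/- Let ξ, ζ, A, P be positive real numbers with ζ ≤ ξ, A ≥ 1, P ≥ 2, and let α ∈ (1, 2]. Then there exists exactly one K₀ ∈ (1, P) such that G_α(K₀) = 0. -/
/-!
Write `G_α(K) = (ζ / ln 2) K - ξ A φ(log₂ (P / K))` with `φ(L) = α L^(α-1) / ln 2 + L^α`.
Since `α > 1`, `φ` is strictly increasing on `[0, ∞)`, and `log₂ (P / K)` is strictly decreasing
and nonnegative on `(0, P]`, so `G_α` is continuous and strictly increasing there. At `K = P`
the logarithm vanishes and `G_α(P) = ζ P / ln 2 > 0`; at `K = 1` we have `log₂ P ≥ 1`, hence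
`φ(log₂ P) > 1 / ln 2` and `ζ ≤ ξ ≤ ξ A` give `G_α(1) < 0`. The intermediate value theorem and
injectivity finish the proof.
-/

open Set Real

theorem StrictMonoOn.existsUnique_Ioo_eq_of_continuousOn {α β : Type*}
    [ConditionallyCompleteLinearOrder α] [TopologicalSpace α] [OrderTopology α]
    [DenselyOrdered α] [LinearOrder β] [TopologicalSpace β] [OrderClosedTopology β]
    {f : α → β} {a b : α} {y : β} (hab : a ≤ b) (hf : StrictMonoOn f (Icc a b))
    (hc : ContinuousOn f (Icc a b)) (hy : y ∈ Ioo (f a) (f b)) :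
    ∃! x, x ∈ Ioo a b ∧ f x = y := by
  obtain ⟨x, hx, rfl⟩ := intermediate_value_Ioo hab hc hy
  exact ⟨x, ⟨hx, rfl⟩, fun x' ⟨hx', hfx'⟩ =>
    hf.injOn (Ioo_subset_Icc_self hx') (Ioo_subset_Icc_self hx) hfx'⟩

noncomputable def penalty (α L : ℝ) : ℝ := α * L ^ (α - 1) / Real.log 2 + L ^ α

noncomputable def Gα (ξ ζ A P α K : ℝ) : ℝ :=
  ζ / Real.log 2 * K - ξ * A * penalty α (logb 2 (P / K))

lemma penalty_strictMonoOn {α : ℝ} (hα : 1 < α) : StrictMonoOn (penalty α) (Ici 0) := by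
  intro L hL M hM hLM
  have h₁ : L ^ (α - 1) < M ^ (α - 1) := rpow_lt_rpow hL hLM (by linarith)
  have h₂ : L ^ α < M ^ α := rpow_lt_rpow hL hLM (by linarith)
  unfold penalty
  gcongr

lemma continuous_penalty {α : ℝ} (hα : 1 ≤ α) : Continuous (penalty α) := by
  unfold penalty
  fun_prop (disch := linarith)

lemma penalty_zero {α : ℝ} (hα : 1 < α) : penalty α 0 = 0 := by
  simp [penalty, zero_rpow (sub_pos.2 hα).ne', zero_rpow (zero_lt_one.trans hα).ne']

lemma inv_log_two_lt_penalty {α L : ℝ} (hα : 1 ≤ α) (hL : 1 ≤ L) :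
    (Real.log 2)⁻¹ < penalty α L := by
  have h₁ : 1 ≤ α * L ^ (α - 1) := one_le_mul_of_one_le_of_one_le hα (one_le_rpow hL (by linarith))
  have h₂ : 0 < L ^ α := rpow_pos_of_pos (by linarith) α
  unfold penalty
  calc (Real.log 2)⁻¹ ≤ α * L ^ (α - 1) / Real.log 2 := by
        rw [inv_eq_one_div]; gcongr
    _ < _ := lt_add_of_pos_right _ h₂

section LogbDiv

variable {P : ℝ}

lemma strictAntiOn_logb_div (hP : 0 < P) : StrictAntiOn (fun K => logb 2 (P / K)) (Ioi 0) :=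
  fun _ hK _ _ hKL => logb_lt_logb one_lt_two (div_pos hP (hK.trans hKL))
    (div_lt_div_of_pos_left hP hK hKL)

lemma logb_div_nonneg {K : ℝ} (hK : K ∈ Ioc 0 P) : 0 ≤ logb 2 (P / K) :=
  logb_nonneg one_lt_two ((one_le_div hK.1).2 hK.2)

lemma continuousOn_logb_div (hP : P ≠ 0) : ContinuousOn (fun K => logb 2 (P / K)) (Ioi 0) :=
  fun _ hK => ((continuousAt_const.div continuousAt_id (ne_of_gt hK)).logb
    (div_ne_zero hP (ne_of_gt hK))).continuousWithinAt

end LogbDiv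

section Gα

variable {ξ ζ A P α : ℝ}

lemma Gα_strictMonoOn (hξ : 0 < ξ) (hζ : 0 ≤ ζ) (hA : 0 < A) (hP : 0 < P) (hα : 1 < α) :
    StrictMonoOn (Gα ξ ζ A P α) (Ioc 0 P) := by
  intro K hK L hL hKL
  have hpen : penalty α (logb 2 (P / L)) < penalty α (logb 2 (P / K)) :=
    penalty_strictMonoOn hα (logb_div_nonneg hL) (logb_div_nonneg hK)
      (strictAntiOn_logb_div hP hK.1 hL.1 hKL)
  have hlin : ζ / Real.log 2 * K ≤ ζ / Real.log 2 * L := by gcongr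
  unfold Gα
  nlinarith [mul_pos hξ hA]

lemma Gα_continuousOn (hP : P ≠ 0) (hα : 1 ≤ α) : ContinuousOn (Gα ξ ζ A P α) (Ioi 0) :=
  (continuousOn_const.mul continuousOn_id).sub
    (continuousOn_const.mul ((continuous_penalty hα).comp_continuousOn (continuousOn_logb_div hP)))

lemma Gα_one_neg (hξ : 0 < ξ) (hζξ : ζ ≤ ξ) (hA : 1 ≤ A) (hP : 2 ≤ P) (hα : 1 ≤ α) :
    Gα ξ ζ A P α 1 < 0 := by
  have hL : 1 ≤ logb 2 P := (le_logb_iff_rpow_le one_lt_two (by linarith)).2 (by simpa using hP)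
  have hpen := inv_log_two_lt_penalty hα hL
  have hpen₀ : 0 < penalty α (logb 2 P) := (inv_pos.2 (log_pos one_lt_two)).trans hpen
  suffices ζ / Real.log 2 < ξ * A * penalty α (logb 2 P) by simpa [Gα] using this
  calc ζ / Real.log 2 ≤ ξ * (Real.log 2)⁻¹ := by
        rw [div_eq_mul_inv]; gcongr
    _ < ξ * penalty α (logb 2 P) := mul_lt_mul_of_pos_left hpen hξ
    _ ≤ ξ * A * penalty α (logb 2 P) := by gcongr; exact le_mul_of_one_le_right hξ.le hA

lemma Gα_self_pos (hζ : 0 < ζ) (hP : 0 < P) (hα : 1 < α) : 0 < Gα ξ ζ A P α P := by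
  simp only [Gα, div_self hP.ne', logb_one, penalty_zero hα, mul_zero, sub_zero]
  exact mul_pos (div_pos hζ (log_pos one_lt_two)) hP

end Gα

/-- For positive ξ, ζ, A, P with ζ ≤ ξ, A ≥ 1, P ≥ 2 and α ∈ (1,2],
there exists exactly one K₀ ∈ (1, P) such that G_α(K₀) = 0. -/
theorem stmt_12 (ξ ζ A P α : ℝ) (hξ : 0 < ξ) (hζ : 0 < ζ)
    (hζξ : ζ ≤ ξ) (hA : 1 ≤ A) (hP : 2 ≤ P) (hα : α ∈ Set.Ioc (1 : ℝ) 2) :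
    ∃! K₀ : ℝ, K₀ ∈ Set.Ioo (1 : ℝ) P ∧
      ζ / Real.log 2 * K₀ -
        ξ * A * (α * Real.logb 2 (P / K₀) ^ (α - 1) / Real.log 2 + Real.logb 2 (P / K₀) ^ α)
        = 0 := by
  have hP₀ : 0 < P := by linarith
  have hIcc : Icc 1 P ⊆ Ioc 0 P := Icc_subset_Ioc_iff (by linarith) |>.2 ⟨zero_lt_one, le_rfl⟩
  exact StrictMonoOn.existsUnique_Ioo_eq_of_continuousOn (by linarith)
    ((Gα_strictMonoOn hξ hζ.le (by linarith) hP₀ hα.1).mono hIcc)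
    ((Gα_continuousOn hP₀.ne' hα.1.le).mono (hIcc.trans Ioc_subset_Ioi_self))
    ⟨Gα_one_neg hξ hζξ hA hP hα.1.le, Gα_self_pos hζ hP₀ hα.1⟩
end

section
/- For every α ∈ (1, 2) and every ℓ > 0, one has H_α(ℓ) = (α(α−1)/ln 2)·ℓ^(α−2) + 3α·ℓ^(α−1) + 2·ln 2·ℓ^α > 1. -/
/-!
Weighted AM-GM with weights `α - 1` and `2 - α` applied to the first two terms,
`(α / ln 2) ℓ^(α-2)` and `(3α / (2-α)) ℓ^(α-1)`, eliminates `ℓ` because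
`(α-1)(α-2) + (2-α)(α-1) = 0`, leaving `(α / ln 2)^(α-1) (3α / (2-α))^(2-α)`,
which exceeds `1` since both bases do. The last term is positive.
-/

open Real

theorem geom_mean_le_weighted_sum_mul_rpow {w₁ w₂ a b x p q : ℝ} (hw₁ : 0 ≤ w₁) (hw₂ : 0 ≤ w₂)
    (hw : w₁ + w₂ = 1) (ha : 0 ≤ a) (hb : 0 ≤ b) (hx : 0 < x) (hpq : w₁ * p + w₂ * q = 0) :
    a ^ w₁ * b ^ w₂ ≤ w₁ * (a * x ^ p) + w₂ * (b * x ^ q) := by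
  have hprod : (a * x ^ p) ^ w₁ * (b * x ^ q) ^ w₂ = a ^ w₁ * b ^ w₂ := by
    rw [mul_rpow ha (by positivity), mul_rpow hb (by positivity), ← rpow_mul hx.le,
      ← rpow_mul hx.le, mul_mul_mul_comm, ← rpow_add hx, mul_comm p, mul_comm q, hpq, rpow_zero,
      mul_one]
  rw [← hprod]
  exact geom_mean_le_arith_mean2_weighted hw₁ hw₂ (by positivity) (by positivity) hw

/-- For every α ∈ (1,2) and every ℓ > 0,
`H_α(ℓ) = (α(α−1)/ln 2)·ℓ^(α−2) + 3α·ℓ^(α−1) + 2·ln 2·ℓ^α > 1`. -/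
theorem stmt_14 (α : ℝ) (hα : α ∈ Set.Ioo (1 : ℝ) 2) (ℓ : ℝ) (hℓ : 0 < ℓ) :
    1 < α * (α - 1) / Real.log 2 * ℓ ^ (α - 2) + 3 * α * ℓ ^ (α - 1)
        + 2 * Real.log 2 * ℓ ^ α := by
  obtain ⟨hα₁, hα₂⟩ := hα
  have hlog_pos : 0 < log 2 := log_pos one_lt_two
  have hlog_lt : log 2 < 1 := by linarith [log_two_lt_d9]
  have hw₁ : 0 < α - 1 := by linarith
  have hw₂ : 0 < 2 - α := by linarith
  have ha : 1 < α / log 2 := by rw [lt_div_iff₀ hlog_pos]; linarith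
  have hb : 1 < 3 * α / (2 - α) := by rw [lt_div_iff₀ hw₂]; linarith
  have amgm := geom_mean_le_weighted_sum_mul_rpow hw₁.le hw₂.le (by ring)
    (by positivity : 0 ≤ α / log 2) (by positivity : 0 ≤ 3 * α / (2 - α)) hℓ
    (show (α - 1) * (α - 2) + (2 - α) * (α - 1) = 0 by ring)
  have hsum : (α - 1) * (α / log 2 * ℓ ^ (α - 2)) + (2 - α) * (3 * α / (2 - α) * ℓ ^ (α - 1))
      = α * (α - 1) / log 2 * ℓ ^ (α - 2) + 3 * α * ℓ ^ (α - 1) := by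
    field_simp
  have hgeom : 1 < (α / log 2) ^ (α - 1) * (3 * α / (2 - α)) ^ (2 - α) :=
    one_lt_mul_of_lt_of_le (one_lt_rpow ha hw₁) (one_le_rpow hb.le hw₂.le)
  have hlast : 0 < 2 * log 2 * ℓ ^ α := by positivity
  linarith
end

section
/- Let α ∈ (1, 2) and set ℓ₀(α) = (3 − 3α + √(α² + 6α − 7))/(4·ln 2). Then ℓ₀(α) > 0, and for every ℓ > 0 the derivative of H_α satisfies H_α'(ℓ) = 0 if and only if ℓ = ℓ₀(α); that is, ℓ₀(α) is the unique positive critical point of H_α. -/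
set_option maxHeartbeats 1000000

/-- For α ∈ (1,2), set ℓ₀(α) = (3 − 3α + √(α² + 6α − 7))/(4·ln 2). Then
ℓ₀(α) > 0 and, for every ℓ > 0, the derivative of H_α vanishes at ℓ iff ℓ = ℓ₀(α); that is,
ℓ₀(α) is the unique positive critical point of H_α. -/
theorem stmt_15 (α : ℝ) (hα : α ∈ Set.Ioo (1 : ℝ) 2)
    (ℓ₀ : ℝ) (hℓ₀ : ℓ₀ = (3 - 3 * α + Real.sqrt (α ^ 2 + 6 * α - 7)) / (4 * Real.log 2)) :
    0 < ℓ₀ ∧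
    ∀ ℓ : ℝ, 0 < ℓ →
      (deriv (fun ℓ : ℝ => α * (α - 1) / Real.log 2 * ℓ ^ (α - 2) + 3 * α * ℓ ^ (α - 1)
          + 2 * Real.log 2 * ℓ ^ α) ℓ = 0 ↔ ℓ = ℓ₀) := by
  obtain ⟨hα1, hα2⟩ := hα
  set L := Real.log 2 with hL
  have hLpos : 0 < L := Real.log_pos (by norm_num)
  set s := Real.sqrt (α ^ 2 + 6 * α - 7) with hs
  have hdnn : (0:ℝ) ≤ α ^ 2 + 6 * α - 7 := by nlinarith
  have hs2 : s ^ 2 = α ^ 2 + 6 * α - 7 := Real.sq_sqrt hdnn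
  have hsnn : 0 ≤ s := Real.sqrt_nonneg _
  have hsgt : 3 * α - 3 < s := by nlinarith
  have hℓ₀pos : 0 < ℓ₀ := by
    rw [hℓ₀]
    apply div_pos (by linarith) (by linarith)
  refine ⟨hℓ₀pos, fun ℓ hℓ => ?_⟩
  have hℓne : ℓ ≠ 0 := ne_of_gt hℓ
  -- compute derivative
  have h1 : HasDerivAt (fun x : ℝ => x ^ (α - 2)) ((α - 2) * ℓ ^ (α - 2 - 1)) ℓ :=
    Real.hasDerivAt_rpow_const (Or.inl hℓne)
  have h2 : HasDerivAt (fun x : ℝ => x ^ (α - 1)) ((α - 1) * ℓ ^ (α - 1 - 1)) ℓ :=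
    Real.hasDerivAt_rpow_const (Or.inl hℓne)
  have h3 : HasDerivAt (fun x : ℝ => x ^ α) (α * ℓ ^ (α - 1)) ℓ :=
    Real.hasDerivAt_rpow_const (Or.inl hℓne)
  have hD : HasDerivAt (fun ℓ : ℝ => α * (α - 1) / L * ℓ ^ (α - 2) + 3 * α * ℓ ^ (α - 1)
      + 2 * L * ℓ ^ α)
      (α * (α - 1) / L * ((α - 2) * ℓ ^ (α - 2 - 1)) + 3 * α * ((α - 1) * ℓ ^ (α - 1 - 1))
        + 2 * L * (α * ℓ ^ (α - 1))) ℓ :=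
    ((h1.const_mul _).add (h2.const_mul _)).add (h3.const_mul _)
  rw [hD.deriv]
  -- exponent rewrites
  have e1 : ℓ ^ (α - 2) = ℓ ^ (α - 3) * ℓ := by
    rw [show α - 2 = (α - 3) + 1 by ring, Real.rpow_add_one hℓne]
  have e2 : ℓ ^ (α - 1) = ℓ ^ (α - 3) * ℓ * ℓ := by
    rw [show α - 1 = ((α - 3) + 1) + 1 by ring, Real.rpow_add_one hℓne,
      Real.rpow_add_one hℓne]
  have e0 : α - 2 - 1 = α - 3 := by ring
  have e0' : α - 1 - 1 = α - 3 + 1 := by ring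
  have tpos : 0 < ℓ ^ (α - 3) := Real.rpow_pos_of_pos hℓ _
  set t := ℓ ^ (α - 3) with ht
  have key : α * (α - 1) / L * ((α - 2) * ℓ ^ (α - 2 - 1)) + 3 * α * ((α - 1) * ℓ ^ (α - 1 - 1))
        + 2 * L * (α * ℓ ^ (α - 1))
      = α * t / L * ((α - 1) * (α - 2) + 3 * (α - 1) * L * ℓ + 2 * L ^ 2 * ℓ ^ 2) := by
    rw [e0, e0', Real.rpow_add_one hℓne, e2, ← ht]
    field_simp
  rw [key]
  have hq : α * t / L ≠ 0 := by positivity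
  rw [div_mul_eq_mul_div, div_eq_zero_iff, mul_eq_zero]
  have hLne : L ≠ 0 := ne_of_gt hLpos
  have hαt : α * t ≠ 0 := by positivity
  set ℓ₁ : ℝ := (3 - 3 * α - s) / (4 * L) with hℓ₁
  have hsum : ℓ₀ + ℓ₁ = 3 * (1 - α) / (2 * L) := by
    rw [hℓ₀, hℓ₁]; field_simp; ring
  have hprod : ℓ₀ * ℓ₁ = (α - 1) * (α - 2) / (2 * L ^ 2) := by
    rw [hℓ₀, hℓ₁]; field_simp; nlinarith [hs2]
  have hfac : (α - 1) * (α - 2) + 3 * (α - 1) * L * ℓ + 2 * L ^ 2 * ℓ ^ 2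
      = 2 * L ^ 2 * (ℓ - ℓ₀) * (ℓ - ℓ₁) := by
    have h1 : 2 * L ^ 2 * (ℓ₀ + ℓ₁) = 2 * L ^ 2 * (3 * (1 - α) / (2 * L)) := by rw [hsum]
    have h2 : 2 * L ^ 2 * (ℓ₀ * ℓ₁) = 2 * L ^ 2 * ((α - 1) * (α - 2) / (2 * L ^ 2)) := by
      rw [hprod]
    have h1' : 2 * L ^ 2 * (ℓ₀ + ℓ₁) = 3 * (1 - α) * L := by
      rw [h1]; field_simp
    have h2' : 2 * L ^ 2 * (ℓ₀ * ℓ₁) = (α - 1) * (α - 2) := by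
      rw [h2]; field_simp
    linear_combination ℓ * h1' - h2'
  have hℓ₁neg : ℓ₁ < 0 := by
    rw [hℓ₁]
    apply div_neg_of_neg_of_pos (by nlinarith) (by linarith)
  constructor
  · rintro (⟨h | hQ⟩ | h)
    · exact absurd h hαt
    · rw [hfac] at hQ
      rcases mul_eq_zero.1 hQ with h' | h'
      · rcases mul_eq_zero.1 h' with h'' | h''
        · exfalso; nlinarith
        · linarith [sub_eq_zero.1 h'']
      · exfalso; linarith [sub_eq_zero.1 h']
    · exact absurd h hLne
  · intro h
    left; right
    rw [hfac, h]
    ring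
end

section
/- Let α ∈ (1, 2) and set ℓ₀(α) = (3 − 3α + √(α² + 6α − 7))/(4·ln 2). Then for every ℓ > 0, H_α(ℓ) ≥ H_α(ℓ₀(α)); that is, the minimum of H_α over (0,∞) is attained at ℓ₀(α). -/
/-- For α ∈ (1,2) and ℓ₀(α) = (3 − 3α + √(α² + 6α − 7))/(4·ln 2), every
ℓ > 0 satisfies H_α(ℓ) ≥ H_α(ℓ₀(α)); i.e. the minimum of H_α over (0,∞) is attained at
ℓ₀(α). -/
theorem stmt_17 (α : ℝ) (hα : α ∈ Set.Ioo (1 : ℝ) 2)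
    (ℓ₀ : ℝ) (hℓ₀ : ℓ₀ = (3 - 3 * α + Real.sqrt (α ^ 2 + 6 * α - 7)) / (4 * Real.log 2)) :
    ∀ ℓ : ℝ, 0 < ℓ →
      α * (α - 1) / Real.log 2 * ℓ₀ ^ (α - 2) + 3 * α * ℓ₀ ^ (α - 1)
          + 2 * Real.log 2 * ℓ₀ ^ α ≤
        α * (α - 1) / Real.log 2 * ℓ ^ (α - 2) + 3 * α * ℓ ^ (α - 1)
          + 2 * Real.log 2 * ℓ ^ α := by
  obtain ⟨hα1, hα2⟩ := hα
  intro ℓ hℓ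
  set L := Real.log 2 with hLdef
  have hLpos : 0 < L := Real.log_pos (by norm_num)
  set s := Real.sqrt (α ^ 2 + 6 * α - 7) with hsdef
  have hdisc : (0:ℝ) ≤ α ^ 2 + 6 * α - 7 := by nlinarith
  have hs2 : s ^ 2 = α ^ 2 + 6 * α - 7 := Real.sq_sqrt hdisc
  have hsnn : 0 ≤ s := Real.sqrt_nonneg _
  have hsgt : 3 * (α - 1) < s := by nlinarith
  have hℓ₀pos : 0 < ℓ₀ := by
    rw [hℓ₀]
    apply div_pos (by linarith) (by linarith)
  -- the key algebraic identity: ℓ₀ is a root of the quadratic in the derivative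
  have key : 2 * L * ℓ₀ ^ 2 + 3 * (α - 1) * ℓ₀ + (α - 1) * (α - 2) / L = 0 := by
    rw [hℓ₀]
    field_simp
    linear_combination 2 * hs2
  set f : ℝ → ℝ := fun x => α * (α - 1) / L * x ^ (α - 2) + 3 * α * x ^ (α - 1)
      + 2 * L * x ^ α with hfdef
  suffices h : f ℓ₀ ≤ f ℓ by simpa [hfdef] using h
  have hderiv : ∀ x : ℝ, 0 < x → HasDerivAt f
      (α * x ^ (α - 3) * ((x - ℓ₀) * (2 * L * x + 2 * L * ℓ₀ + 3 * (α - 1)))) x := by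
    intro x hx
    have h1 := (Real.hasDerivAt_rpow_const (p := α - 2) (Or.inl hx.ne')).const_mul
      (α * (α - 1) / L)
    have h2 := (Real.hasDerivAt_rpow_const (p := α - 1) (Or.inl hx.ne')).const_mul (3 * α)
    have h3 := (Real.hasDerivAt_rpow_const (p := α) (Or.inl hx.ne')).const_mul (2 * L)
    have H := (h1.add h2).add h3
    refine H.congr_deriv (Eq.symm ?_)
    have r1 : x ^ (α - 2 - 1) = x ^ (α - 3) := by ring_nf
    have r2 : x ^ (α - 1 - 1) = x ^ (α - 3) * x := by
      rw [show α - 1 - 1 = (α - 3) + 1 by ring, Real.rpow_add hx, Real.rpow_one]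
    have r3 : x ^ (α - 1) = x ^ (α - 3) * x * x := by
      rw [show α - 1 = (α - 3) + 1 + 1 by ring, Real.rpow_add hx, Real.rpow_add hx,
        Real.rpow_one]
    rw [r1, r2, r3]
    have hL : L ≠ 0 := hLpos.ne'
    linear_combination (-(α * x ^ (α - 3))) * key
  have hcont : ∀ x : ℝ, 0 < x → ContinuousAt f x := fun x hx => (hderiv x hx).continuousAt
  rcases le_or_gt ℓ ℓ₀ with h | h
  · have hanti : StrictAntiOn f (Set.Ioc 0 ℓ₀) := by
      apply strictAntiOn_of_deriv_neg (convex_Ioc _ _)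
      · intro x hx
        exact (hcont x hx.1).continuousWithinAt
      · intro x hx
        rw [interior_Ioc] at hx
        rw [(hderiv x hx.1).deriv]
        have h1 : 0 < x ^ (α - 3) := Real.rpow_pos_of_pos hx.1 _
        have h2 : x - ℓ₀ < 0 := by linarith [hx.2]
        have h3 : 0 < 2 * L * x + 2 * L * ℓ₀ + 3 * (α - 1) := by nlinarith [hx.1]
        have := mul_pos (mul_pos (by linarith : (0:ℝ) < α) h1) h3
        nlinarith
    rcases eq_or_lt_of_le h with rfl | h'
    · exact le_refl _
    · exact (hanti ⟨hℓ, h⟩ ⟨hℓ₀pos, le_refl _⟩ h').le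
  · have hmono : StrictMonoOn f (Set.Ici ℓ₀) := by
      apply strictMonoOn_of_deriv_pos (convex_Ici _)
      · intro x hx
        exact (hcont x (lt_of_lt_of_le hℓ₀pos hx)).continuousWithinAt
      · intro x hx
        rw [interior_Ici] at hx
        have hxpos : 0 < x := lt_trans hℓ₀pos hx
        rw [(hderiv x hxpos).deriv]
        have h1 : 0 < x ^ (α - 3) := Real.rpow_pos_of_pos hxpos _
        have h2 : 0 < x - ℓ₀ := sub_pos.2 hx
        have h3 : 0 < 2 * L * x + 2 * L * ℓ₀ + 3 * (α - 1) := by nlinarith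
        have := mul_pos (mul_pos (by linarith : (0:ℝ) < α) h1) (mul_pos h2 h3)
        nlinarith
    exact (hmono (le_refl ℓ₀) h.le h).le
end
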